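/- arXiv:2407.21036 — 2 statements merged into one kernel-verified Lean document; each statement's English description precedes it below -/
import Mathlib

section
/- Let X and Z be real normed spaces, let Γ be an index set, let y : Γ → X and r : Γ → ℝ with r_γ > 0 for every γ ∈ Γ, let τ > 2 and set δ = 2/(τ − 2), and let C ≥ 0, L₂ ≥ 0 and h : X → Z. Assume that for every γ ∈ Γ the map h is C-Lipschitz on the open ball B(y_γ, r_γ), and that ‖h(y_α) − h(y_γ)‖ ≤ L₂·‖y_α − y_γ‖ for all α, γ ∈ Γ. Set U = ⋃_{γ ∈ Γ} B(y_γ, r_γ/τ) and L₃ = max{2δ·C + (2δ + 1)·L₂, C}. Then h is L₃-Lipschitz on U, i.e. ‖h(x) − h(y)‖ ≤ L₃·‖x − y‖ for all x, y ∈ U. -/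
set_option maxHeartbeats 1000000 in
/-- Local-to-global Lipschitz lemma of the corrigendum: a map uniformly
`C`-Lipschitz on each ball `B(y_γ, r_γ)` of a family and `L₂`-Lipschitz along
the family of centers is `L₃`-Lipschitz on the union of the `τ`-fold shrunken
balls, where `δ = 2/(τ-2)` and `L₃ = max (2δC + (2δ+1)L₂) C`. -/
theorem stmt2 {X Z : Type*} [NormedAddCommGroup X] [NormedSpace ℝ X]
    [NormedAddCommGroup Z] [NormedSpace ℝ Z]
    {Γ : Type*} (y : Γ → X) (r : Γ → ℝ) (hr : ∀ γ, 0 < r γ)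
    (τ δ : ℝ) (hτ : 2 < τ) (hδ : δ = 2 / (τ - 2))
    (C L₂ : ℝ) (hC : 0 ≤ C) (hL₂ : 0 ≤ L₂) (h : X → Z)
    (hLip : ∀ γ, ∀ u ∈ Metric.ball (y γ) (r γ), ∀ v ∈ Metric.ball (y γ) (r γ),
      ‖h u - h v‖ ≤ C * ‖u - v‖)
    (hcenters : ∀ α γ, ‖h (y α) - h (y γ)‖ ≤ L₂ * ‖y α - y γ‖)
    (U : Set X) (hU : U = ⋃ γ, Metric.ball (y γ) (r γ / τ))
    (L₃ : ℝ) (hL₃ : L₃ = max (2 * δ * C + (2 * δ + 1) * L₂) C) :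
    ∀ x ∈ U, ∀ z ∈ U, ‖h x - h z‖ ≤ L₃ * ‖x - z‖ := by
  have hτ0 : 0 < τ := by linarith
  have hτ2 : 0 < τ - 2 := by linarith
  have hδ0 : 0 ≤ δ := by rw [hδ]; positivity
  have hδτ : δ * (τ - 2) = 2 := by rw [hδ]; field_simp
  have hCL : C ≤ L₃ := by rw [hL₃]; exact le_max_right _ _
  have hAL : 2 * δ * C + (2 * δ + 1) * L₂ ≤ L₃ := by rw [hL₃]; exact le_max_left _ _
  have hsub : ∀ γ, Metric.ball (y γ) (r γ / τ) ⊆ Metric.ball (y γ) (r γ) := by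
    intro γ
    apply Metric.ball_subset_ball
    rw [div_le_iff₀ hτ0]
    nlinarith [hr γ]
  -- key claim: case r α ≤ r γ
  have key : ∀ α γ (x z : X), r α ≤ r γ → x ∈ Metric.ball (y α) (r α / τ) →
      z ∈ Metric.ball (y γ) (r γ / τ) → ‖h x - h z‖ ≤ L₃ * ‖x - z‖ := by
    intro α γ x z hrle hx hz
    have hxn : ‖x - y α‖ < r α / τ := by
      rw [Metric.mem_ball, dist_eq_norm] at hx; exact hx
    have hzn : ‖z - y γ‖ < r γ / τ := by
      rw [Metric.mem_ball, dist_eq_norm] at hz; exact hz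
    by_cases hmem : x ∈ Metric.ball (y γ) (r γ)
    · have := hLip γ x hmem z (hsub γ hz)
      calc ‖h x - h z‖ ≤ C * ‖x - z‖ := this
        _ ≤ L₃ * ‖x - z‖ := by
            apply mul_le_mul_of_nonneg_right hCL (norm_nonneg _)
    · -- x is far from y γ
      have hfar : r γ ≤ ‖x - y γ‖ := by
        rw [Metric.mem_ball, dist_eq_norm, not_lt] at hmem; exact hmem
      have hxball : x ∈ Metric.ball (y α) (r α) := hsub α hx
      have hyball : y α ∈ Metric.ball (y α) (r α) := Metric.mem_ball_self (hr α)
      have t1 : ‖h x - h (y α)‖ ≤ C * ‖x - y α‖ := hLip α x hxball (y α) hyball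
      have t2 : ‖h (y α) - h (y γ)‖ ≤ L₂ * ‖y α - y γ‖ := hcenters α γ
      have t3 : ‖h (y γ) - h z‖ ≤ C * ‖y γ - z‖ := by
        have := hLip γ (y γ) (Metric.mem_ball_self (hr γ)) z (hsub γ hz)
        exact this
      have tri : ‖h x - h z‖ ≤ ‖h x - h (y α)‖ + ‖h (y α) - h (y γ)‖ + ‖h (y γ) - h z‖ := by
        have := norm_sub_le_norm_sub_add_norm_sub (h x) (h (y α)) (h z)
        calc ‖h x - h z‖ ≤ ‖h x - h (y α)‖ + ‖h (y α) - h z‖ :=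
              norm_sub_le_norm_sub_add_norm_sub _ _ _
          _ ≤ ‖h x - h (y α)‖ + (‖h (y α) - h (y γ)‖ + ‖h (y γ) - h z‖) := by
              gcongr; exact norm_sub_le_norm_sub_add_norm_sub _ _ _
          _ = _ := by ring
      have tri2 : ‖y α - y γ‖ ≤ ‖x - y α‖ + ‖x - z‖ + ‖z - y γ‖ := by
        calc ‖y α - y γ‖ ≤ ‖y α - x‖ + ‖x - y γ‖ :=
              norm_sub_le_norm_sub_add_norm_sub _ _ _
          _ ≤ ‖y α - x‖ + (‖x - z‖ + ‖z - y γ‖) := by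
              gcongr; exact norm_sub_le_norm_sub_add_norm_sub _ _ _
          _ = ‖x - y α‖ + ‖x - z‖ + ‖z - y γ‖ := by rw [norm_sub_rev]; ring
      have tri3 : ‖x - y γ‖ ≤ ‖x - z‖ + ‖z - y γ‖ :=
        norm_sub_le_norm_sub_add_norm_sub _ _ _
      set A := ‖x - y α‖
      set Bn := ‖z - y γ‖
      set D := ‖x - z‖
      have hD0 : 0 ≤ D := norm_nonneg _
      have hA0 : 0 ≤ A := norm_nonneg _
      have hB0 : 0 ≤ Bn := norm_nonneg _
      -- r γ ≤ D + Bn, Bn < r γ / τ ⇒ r γ * (τ - 1) < τ * D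
      have hrγD : r γ * (τ - 1) ≤ τ * D := by
        have : r γ ≤ D + Bn := le_trans hfar tri3
        have hB : Bn ≤ r γ / τ := le_of_lt hzn
        rw [le_div_iff₀ hτ0] at hB
        nlinarith
      -- A + Bn ≤ 2 r γ / τ ⇒ (A+Bn)(τ-1) ≤ 2D ≤ δ D (τ-1)
      have hAB : (A + Bn) * (τ - 1) ≤ 2 * D := by
        have hA' : A * τ < r α := (lt_div_iff₀ hτ0).mp hxn
        have hB' : Bn * τ < r γ := (lt_div_iff₀ hτ0).mp hzn
        nlinarith
      have hδD : A + Bn ≤ δ * D := by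
        have h2D : 2 * D ≤ δ * D * (τ - 1) := by nlinarith
        have hτ1 : 0 < τ - 1 := by linarith
        nlinarith
      have bound : ‖h x - h z‖ ≤ C * A + L₂ * (A + D + Bn) + C * Bn := by
        have t3' : ‖y γ - z‖ = Bn := by rw [norm_sub_rev]
        calc ‖h x - h z‖ ≤ ‖h x - h (y α)‖ + ‖h (y α) - h (y γ)‖ + ‖h (y γ) - h z‖ := tri
          _ ≤ C * A + L₂ * (A + D + Bn) + C * Bn := by
              have t2' : ‖h (y α) - h (y γ)‖ ≤ L₂ * (A + D + Bn) := by
                refine le_trans t2 ?_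
                apply mul_le_mul_of_nonneg_left _ hL₂
                linarith [tri2]
              rw [t3'] at t3
              linarith
      calc ‖h x - h z‖ ≤ C * A + L₂ * (A + D + Bn) + C * Bn := bound
        _ ≤ (2 * δ * C + (2 * δ + 1) * L₂) * D := by
            have e1 : C * (A + Bn) ≤ C * (δ * D) := mul_le_mul_of_nonneg_left hδD hC
            have e2 : L₂ * (A + Bn) ≤ L₂ * (δ * D) := mul_le_mul_of_nonneg_left hδD hL₂
            have e3 : 0 ≤ δ * C * D := by positivity
            have e4 : 0 ≤ δ * L₂ * D := by positivity
            nlinarith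
        _ ≤ L₃ * D := mul_le_mul_of_nonneg_right hAL hD0
  intro x hx z hz
  rw [hU] at hx hz
  obtain ⟨α, hxα⟩ := Set.mem_iUnion.mp hx
  obtain ⟨γ, hzγ⟩ := Set.mem_iUnion.mp hz
  rcases le_total (r α) (r γ) with hle | hle
  · exact key α γ x z hle hxα hzγ
  · rw [norm_sub_rev x z, norm_sub_rev (h x)]
    exact key γ α z x hle hzγ hxα
end

section
/- Let X and Z be real normed spaces and let K > 0. Assume the pair (X, Z) has property (E) with constant K, that is: for every subset S ⊆ X, every L' > 0 and every map g : X → Z that is L'-Lipschitz on S, there exists a map G : X → Z that is (K·L')-Lipschitz on all of X and agrees with g on S. Then for every nonempty subset U ⊆ X, every L > 0, every Q > 0, and every h : X → Z that is L-Lipschitz on U with ‖h(x)‖ ≤ Q for all x ∈ U, there exists H : X → Z such that H is (K·L)-Lipschitz on X, H(x) = h(x) for all x ∈ U, and ‖H(x)‖ ≤ (K + 1)·Q for all x ∈ X. -/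
/-- Bounded-range Lipschitz extension from property (E): if the pair `(X, Z)`
has property (E) with constant `K`, then every bounded `L`-Lipschitz map on a
nonempty subset `U` admits a `K·L`-Lipschitz extension to `X` bounded by
`(K+1)·Q`. -/
theorem stmt5 {X Z : Type*} [NormedAddCommGroup X] [NormedSpace ℝ X]
    [NormedAddCommGroup Z] [NormedSpace ℝ Z]
    (K : ℝ) (hK : 0 < K)
    (hE : ∀ (S : Set X) (L' : ℝ), 0 < L' → ∀ g : X → Z,
      (∀ u ∈ S, ∀ v ∈ S, ‖g u - g v‖ ≤ L' * ‖u - v‖) →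
      ∃ G : X → Z, (∀ u v : X, ‖G u - G v‖ ≤ K * L' * ‖u - v‖) ∧ ∀ s ∈ S, G s = g s) :
    ∀ (U : Set X), U.Nonempty → ∀ (L Q : ℝ), 0 < L → 0 < Q → ∀ h : X → Z,
      (∀ u ∈ U, ∀ v ∈ U, ‖h u - h v‖ ≤ L * ‖u - v‖) →
      (∀ x ∈ U, ‖h x‖ ≤ Q) →
      ∃ H : X → Z, (∀ u v : X, ‖H u - H v‖ ≤ K * L * ‖u - v‖) ∧
        (∀ x ∈ U, H x = h x) ∧ ∀ x : X, ‖H x‖ ≤ (K + 1) * Q := by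
  intro U hU L Q hL hQ h hLip hBdd
  classical
  set F : Set X := {x | Q / L ≤ Metric.infDist x U} with hF
  have hUF : ∀ x ∈ U, x ∉ F := by
    intro x hx hxF
    have h0 : Metric.infDist x U = 0 := Metric.infDist_zero_of_mem hx
    have : Q / L ≤ 0 := by have := hxF; rw [Set.mem_setOf_eq, h0] at this; exact this
    exact absurd this (not_le.2 (div_pos hQ hL))
  set g : X → Z := fun x => if x ∈ U then h x else 0 with hg
  have hgU : ∀ x ∈ U, g x = h x := fun x hx => by simp [hg, hx]
  have hgF : ∀ x ∈ F, g x = 0 := fun x hx => by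
    have : x ∉ U := fun hxU => hUF x hxU hx
    simp [hg, this]
  -- g is L-Lipschitz on U ∪ F
  have key : ∀ u ∈ U, ∀ v ∈ F, ‖g u - g v‖ ≤ L * ‖u - v‖ := by
    intro u hu v hv
    rw [hgU u hu, hgF v hv, sub_zero]
    have h1 : Metric.infDist v U ≤ ‖u - v‖ := by
      have := Metric.infDist_le_dist_of_mem (x := v) hu
      rwa [dist_eq_norm, ← norm_neg, neg_sub] at this
    have h2 : Q ≤ L * ‖u - v‖ := by
      have := hv
      have h3 : Q / L ≤ ‖u - v‖ := le_trans this h1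
      calc Q = L * (Q / L) := by field_simp
        _ ≤ L * ‖u - v‖ := by nlinarith
    exact le_trans (hBdd u hu) h2
  have hgLip : ∀ u ∈ U ∪ F, ∀ v ∈ U ∪ F, ‖g u - g v‖ ≤ L * ‖u - v‖ := by
    intro u hu v hv
    rcases hu with hu | hu <;> rcases hv with hv | hv
    · rw [hgU u hu, hgU v hv]; exact hLip u hu v hv
    · exact key u hu v hv
    · rw [norm_sub_rev, ← norm_neg (u - v), neg_sub]; exact key v hv u hu
    · rw [hgF u hu, hgF v hv, sub_zero, norm_zero]
      positivity
  obtain ⟨G, hGLip, hGeq⟩ := hE (U ∪ F) L hL g hgLip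
  refine ⟨G, hGLip, fun x hx => by rw [hGeq x (Or.inl hx), hgU x hx], ?_⟩
  intro x
  by_cases hxF : x ∈ F
  · rw [hGeq x (Or.inr hxF), hgF x hxF, norm_zero]
    positivity
  · -- infDist x U < Q / L, so there is u ∈ U with dist x u < Q / L
    have hlt : Metric.infDist x U < Q / L := not_le.1 hxF
    obtain ⟨u, hu, hd⟩ := (Metric.infDist_lt_iff hU).1 hlt
    have hGu : G u = h u := by rw [hGeq u (Or.inl hu), hgU u hu]
    have : ‖G x‖ ≤ ‖G x - G u‖ + ‖G u‖ := by
      calc ‖G x‖ = ‖(G x - G u) + G u‖ := by congr 1; abel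
        _ ≤ ‖G x - G u‖ + ‖G u‖ := norm_add_le _ _
    have h1 : ‖G x - G u‖ ≤ K * L * ‖x - u‖ := hGLip x u
    have h2 : ‖x - u‖ ≤ Q / L := by
      rw [← dist_eq_norm]; exact le_of_lt hd
    have h3 : ‖G u‖ ≤ Q := hGu ▸ hBdd u hu
    have h4 : K * L * ‖x - u‖ ≤ K * Q := by
      have := mul_le_mul_of_nonneg_left h2 (le_of_lt (mul_pos hK hL))
      calc K * L * ‖x - u‖ ≤ K * L * (Q / L) := this
        _ = K * Q := by field_simp
    calc ‖G x‖ ≤ ‖G x - G u‖ + ‖G u‖ := this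
      _ ≤ K * Q + Q := add_le_add (le_trans h1 h4) h3
      _ = (K + 1) * Q := by ring
end
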